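/- arXiv:1502.07386 — 5 statements merged into one kernel-verified Lean document; each statement's English description precedes it below -/
import Mathlib

section
/- Let A = Aᵀ ∈ ℝ^{3×3} with W = tr(A)I − A positive definite. A rotation R ∈ SO(3) satisfies P_a(AR) = 0 (i.e. AR is symmetric) if and only if R = I or R = R_a(π, v) for some unit eigenvector v of A. -/
/-!
If `A R` is symmetric, write `K = R - Rᵀ = [w]ₓ`. For symmetric `A` one has
`A [w]ₓ + [w]ₓ A = [W w]ₓ` with `W = tr(A) I - A`, and pairing this with `[w]ₓ` gives
`2 w ⬝ W w = -2 tr(K² A)`, which vanishes because `A R = Rᵀ A`. Positive definiteness of `W`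
forces `w = 0`, so `R` is a symmetric rotation, i.e. an involution. If `R ≠ I`, its fixed space
is a line `ℝ u`: two fixed vectors with nonzero cross product would make `R` fix a basis. Since
`x + R x` is always fixed, `R x = 2 (u ⬝ x) u - x`, i.e. `R = R_a(π, u)`; and `A`, commuting
with `R`, maps the fixed line `ℝ u` to itself. Conversely `A (2 v vᵀ - I) = 2 λ v vᵀ - A` is
symmetric when `A v = λ v`.
-/

open Matrix Real

noncomputable section

/-- The skew-symmetric cross-product matrix `[u]ₓ`. -/
def skew (u : Fin 3 → ℝ) : Matrix (Fin 3) (Fin 3) ℝ :=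
  !![0, -u 2, u 1; u 2, 0, -u 0; -u 1, u 0, 0]

/-- Inverse of `skew` on skew-symmetric matrices. -/
def vex (M : Matrix (Fin 3) (Fin 3) ℝ) : Fin 3 → ℝ :=
  ![M 2 1, M 0 2, M 1 0]

/-- `ψ(A) = vex((A - Aᵀ)/2)`. -/
def psiMap (M : Matrix (Fin 3) (Fin 3) ℝ) : Fin 3 → ℝ :=
  vex ((1 / 2 : ℝ) • (M - Mᵀ))

/-- Cross product on `ℝ³`. -/
def cross3 (x y : Fin 3 → ℝ) : Fin 3 → ℝ :=
  ![x 1 * y 2 - x 2 * y 1, x 2 * y 0 - x 0 * y 2, x 0 * y 1 - x 1 * y 0]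

/-- Rodrigues rotation. -/
def Ra (θ : ℝ) (u : Fin 3 → ℝ) : Matrix (Fin 3) (Fin 3) ℝ :=
  1 + Real.sin θ • skew u + (1 - Real.cos θ) • (skew u * skew u)

/-- Membership in SO(3). -/
def SO3 (R : Matrix (Fin 3) (Fin 3) ℝ) : Prop :=
  R * Rᵀ = 1 ∧ R.det = 1

lemma half_smul_sub_transpose_eq_zero_iff {n : Type*} (M : Matrix n n ℝ) :
    (1 / 2 : ℝ) • (M - Mᵀ) = 0 ↔ Mᵀ = M := by
  rw [smul_eq_zero, sub_eq_zero, eq_comm (a := M)]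
  norm_num

lemma skew_zero : skew 0 = 0 := by
  ext i j
  fin_cases i <;> fin_cases j <;> simp [skew]

lemma skew_vex {M : Matrix (Fin 3) (Fin 3) ℝ} (hM : Mᵀ = -M) : skew (vex M) = M := by
  have h : ∀ i j, M j i = -M i j := fun i j => congrFun (congrFun hM i) j
  ext i j
  fin_cases i <;> fin_cases j <;> simp [skew, vex] <;>
    linarith [h 0 0, h 1 1, h 2 2, h 0 1, h 0 2, h 1 2]

lemma trace_transpose_skew_mul_skew (a b : Fin 3 → ℝ) :
    ((skew a)ᵀ * skew b).trace = 2 * (a ⬝ᵥ b) := by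
  simp only [trace, skew, diag_apply, Matrix.mul_apply, transpose_apply, of_apply, cons_val',
    cons_val_fin_one, Fin.sum_univ_three, cons_val_zero, cons_val_one, cons_val, dotProduct]
  ring

lemma mul_skew_add_skew_mul_transpose (M : Matrix (Fin 3) (Fin 3) ℝ) (x : Fin 3 → ℝ) :
    M * skew x + skew x * Mᵀ = skew ((M.trace • 1 - Mᵀ) *ᵥ x) := by
  ext i j
  fin_cases i <;> fin_cases j <;>
    simp [skew, Matrix.mul_apply, Matrix.mulVec, Matrix.vecMul, dotProduct, Matrix.trace,
      Matrix.one_apply, Fin.sum_univ_three] <;> ring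

lemma skew_mul_skew (v : Fin 3 → ℝ) :
    skew v * skew v = vecMulVec v v - (v ⬝ᵥ v) • 1 := by
  ext i j
  fin_cases i <;> fin_cases j <;>
    simp [skew, Matrix.mul_apply, vecMulVec_apply, dotProduct, Fin.sum_univ_three] <;> ring

lemma Ra_pi {u : Fin 3 → ℝ} (hu : u ⬝ᵥ u = 1) : Ra π u = (2 : ℝ) • vecMulVec u u - 1 := by
  rw [Ra, sin_pi, cos_pi, skew_mul_skew, hu]
  module

lemma Ra_pi_mulVec {u : Fin 3 → ℝ} (hu : u ⬝ᵥ u = 1) (x : Fin 3 → ℝ) :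
    Ra π u *ᵥ x = (2 * (u ⬝ᵥ x)) • u - x := by
  rw [Ra_pi hu, sub_mulVec, smul_mulVec, vecMulVec_mulVec, one_mulVec, op_smul_eq_smul, smul_smul]

lemma trace_sub_transpose_sq_mul_eq_zero {A R : Matrix (Fin 3) (Fin 3) ℝ} (hR : R * Rᵀ = 1)
    (hAR : A * R = Rᵀ * A) : ((R - Rᵀ) * (R - Rᵀ) * A).trace = 0 := by
  have hR' : Rᵀ * R = 1 := mul_eq_one_comm.mp hR
  have hRRA : (R * R * A).trace = A.trace := by
    rw [Matrix.mul_assoc, trace_mul_comm, Matrix.mul_assoc, hAR, ← Matrix.mul_assoc, hR,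
      Matrix.one_mul]
  have hRtRtA : (Rᵀ * Rᵀ * A).trace = A.trace := by
    rw [Matrix.mul_assoc, ← hAR, ← Matrix.mul_assoc, trace_mul_cycle, hR, Matrix.one_mul]
  have hexpand : (R - Rᵀ) * (R - Rᵀ) * A = R * R * A + Rᵀ * Rᵀ * A - A - A := by
    simp only [sub_mul, mul_sub, hR, hR', Matrix.one_mul]
    abel
  rw [hexpand, trace_sub, trace_sub, trace_add, hRRA, hRtRtA]
  ring

lemma vex_dotProduct_mulVec_vex_eq_zero {A R : Matrix (Fin 3) (Fin 3) ℝ} (hA : Aᵀ = A)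
    (hR : R * Rᵀ = 1) (hAR : A * R = Rᵀ * A) :
    vex (R - Rᵀ) ⬝ᵥ ((A.trace • 1 - A) *ᵥ vex (R - Rᵀ)) = 0 := by
  set K := R - Rᵀ with hK
  have hKt : Kᵀ = -K := by rw [hK, transpose_sub, transpose_transpose, neg_sub]
  have hskew : skew ((A.trace • 1 - A) *ᵥ vex K) = A * K + K * A := by
    have h := mul_skew_add_skew_mul_transpose A (vex K)
    rw [hA, skew_vex hKt] at h
    exact h.symm
  -- `2 (w ⬝ᵥ W w) = tr (Kᵀ (A K + K A)) = -2 tr (K K A)`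
  have h := trace_transpose_skew_mul_skew (vex K) ((A.trace • 1 - A) *ᵥ vex K)
  rw [hskew, skew_vex hKt, hKt, neg_mul, trace_neg, Matrix.mul_add, trace_add,
    ← Matrix.mul_assoc, trace_mul_cycle, ← Matrix.mul_assoc,
    trace_sub_transpose_sq_mul_eq_zero hR hAR] at h
  linarith

lemma transpose_eq_self_of_mul_eq_transpose_mul {A R : Matrix (Fin 3) (Fin 3) ℝ} (hA : Aᵀ = A)
    (hW : ∀ x : Fin 3 → ℝ, x ≠ 0 →
      0 < x ⬝ᵥ ((A.trace • (1 : Matrix (Fin 3) (Fin 3) ℝ) - A) *ᵥ x))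
    (hR : R * Rᵀ = 1) (hAR : A * R = Rᵀ * A) : Rᵀ = R := by
  have hK : (R - Rᵀ)ᵀ = -(R - Rᵀ) := by rw [transpose_sub, transpose_transpose, neg_sub]
  have hvex : vex (R - Rᵀ) = 0 := by
    by_contra hne
    exact (hW _ hne).ne' (vex_dotProduct_mulVec_vex_eq_zero hA hR hAR)
  rw [eq_comm, ← sub_eq_zero, ← skew_vex hK, hvex, skew_zero]

lemma cross_mulVec_mulVec {S : Type*} [CommRing S] (M : Matrix (Fin 3) (Fin 3) S)
    (a b : Fin 3 → S) : (M *ᵥ a) ⨯₃ (M *ᵥ b) = M.adjugateᵀ *ᵥ (a ⨯₃ b) := by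
  ext i
  fin_cases i <;>
    simp [cross_apply, mulVec, dotProduct, Fin.sum_univ_three, adjugate_fin_three] <;> ring

lemma SO3.adjugate_eq_transpose {R : Matrix (Fin 3) (Fin 3) ℝ} (hR : SO3 R) :
    R.adjugate = Rᵀ := by
  rw [← inv_eq_right_inv hR.1, inv_def, hR.2, Ring.inverse_one, one_smul]

lemma SO3.mulVec_cross {R : Matrix (Fin 3) (Fin 3) ℝ} (hR : SO3 R) (a b : Fin 3 → ℝ) :
    R *ᵥ (a ⨯₃ b) = (R *ᵥ a) ⨯₃ (R *ᵥ b) := by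
  rw [cross_mulVec_mulVec, hR.adjugate_eq_transpose, transpose_transpose]

/-- `R` fixes the basis `x, y, x ⨯₃ y`. -/
lemma SO3.eq_one_of_mulVec_eq_self {R : Matrix (Fin 3) (Fin 3) ℝ} (hR : SO3 R)
    {x y : Fin 3 → ℝ} (hx : R *ᵥ x = x) (hy : R *ᵥ y = y) (hxy : x ⨯₃ y ≠ 0) : R = 1 := by
  have hz : R *ᵥ (x ⨯₃ y) = x ⨯₃ y := by rw [hR.mulVec_cross, hx, hy]
  set B : Matrix (Fin 3) (Fin 3) ℝ := ![x, y, x ⨯₃ y]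
  have hdet : B.det ≠ 0 := by
    rw [← triple_product_eq_det, triple_product_permutation, triple_product_permutation]
    simpa using hxy
  have hBR : B * Rᵀ = B * 1 := by
    funext i
    rw [mul_apply_eq_vecMul, vecMul_transpose, Matrix.mul_one]
    fin_cases i
    exacts [hx, hy, hz]
  have hB : IsUnit B := (isUnit_iff_isUnit_det B).mpr (isUnit_iff_ne_zero.mpr hdet)
  exact transpose_eq_one.mp (hB.mul_left_cancel hBR)

lemma dotProduct_self_smul_eq_of_cross_eq_zero {q p : Fin 3 → ℝ} (h : q ⨯₃ p = 0) :
    (q ⬝ᵥ q) • p = (p ⬝ᵥ q) • q := by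
  have := cross_cross_eq_smul_sub_smul q p q
  rw [h, map_zero, LinearMap.zero_apply, eq_comm, sub_eq_zero] at this
  exact this

lemma SO3.exists_mulVec_eq_of_transpose_eq_self {R : Matrix (Fin 3) (Fin 3) ℝ} (hR : SO3 R)
    (hsymm : Rᵀ = R) (hne : R ≠ 1) :
    ∃ u : Fin 3 → ℝ, u ⬝ᵥ u = 1 ∧ ∀ x, R *ᵥ x = (2 * (u ⬝ᵥ x)) • u - x := by
  have hRR : R * R = 1 := by simpa only [hsymm] using hR.1
  have hfix : ∀ x, R *ᵥ (x + R *ᵥ x) = x + R *ᵥ x := fun x => by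
    rw [mulVec_add, mulVec_mulVec, hRR, one_mulVec, add_comm]
  obtain ⟨q, hRq, hq⟩ : ∃ q, R *ᵥ q = q ∧ q ≠ 0 := by
    by_contra! h
    have hneg : R = -1 := mulVec_injective <| funext fun x => by
      rw [neg_mulVec, one_mulVec]
      exact eq_neg_of_add_eq_zero_right (h _ (hfix x))
    have := hR.2
    rw [hneg, det_neg, det_one] at this
    norm_num at this
  have hs : 0 < q ⬝ᵥ q :=
    (dotProduct_self_star_nonneg q).lt_of_ne' (mt dotProduct_self_eq_zero.mp hq)
  have hRdot : ∀ x, (R *ᵥ x) ⬝ᵥ q = x ⬝ᵥ q := fun x => by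
    rw [dotProduct_comm, dotProduct_mulVec, ← hsymm, vecMul_transpose, hRq, dotProduct_comm]
  have hpar : ∀ x, (q ⬝ᵥ q) • (x + R *ᵥ x) = (2 * (q ⬝ᵥ x)) • q := fun x => by
    have hcross : q ⨯₃ (x + R *ᵥ x) = 0 := by
      by_contra h
      exact hne (hR.eq_one_of_mulVec_eq_self hRq (hfix x) h)
    rw [dotProduct_self_smul_eq_of_cross_eq_zero hcross, add_dotProduct, hRdot,
      dotProduct_comm]
    ring_nf
  have hc : (√(q ⬝ᵥ q))⁻¹ * (√(q ⬝ᵥ q))⁻¹ * (q ⬝ᵥ q) = 1 := by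
    rw [← mul_inv, mul_self_sqrt hs.le, inv_mul_cancel₀ hs.ne']
  refine ⟨(√(q ⬝ᵥ q))⁻¹ • q, ?_, fun x => ?_⟩
  · rw [smul_dotProduct, dotProduct_smul, smul_eq_mul, smul_eq_mul, ← mul_assoc, hc]
  · rw [smul_dotProduct, smul_smul, smul_eq_mul]
    apply smul_right_injective _ hs.ne'
    linear_combination (norm := module) hpar x - (2 * (q ⬝ᵥ x)) • hc • q

lemma mulVec_eq_smul_of_commute_Ra_pi {A : Matrix (Fin 3) (Fin 3) ℝ} {u : Fin 3 → ℝ}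
    (hu : u ⬝ᵥ u = 1) (hAR : A * Ra π u = Ra π u * A) : A *ᵥ u = (u ⬝ᵥ (A *ᵥ u)) • u := by
  have hRu : Ra π u *ᵥ u = u := by rw [Ra_pi_mulVec hu, hu]; module
  have h : Ra π u *ᵥ (A *ᵥ u) = A *ᵥ u := by rw [mulVec_mulVec, ← hAR, ← mulVec_mulVec, hRu]
  rw [Ra_pi_mulVec hu] at h
  linear_combination (norm := module) -(1 / 2 : ℝ) • h

lemma transpose_mul_Ra_pi {A : Matrix (Fin 3) (Fin 3) ℝ} (hA : Aᵀ = A) {v : Fin 3 → ℝ} {lam : ℝ}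
    (hv : v ⬝ᵥ v = 1) (hAv : A *ᵥ v = lam • v) : (A * Ra π v)ᵀ = A * Ra π v := by
  rw [Ra_pi hv, Matrix.mul_sub, Matrix.mul_one, mul_smul_comm, mul_vecMulVec, hAv,
    smul_vecMulVec, transpose_sub, transpose_smul, transpose_smul, transpose_vecMulVec, hA]

/-- Critical points of `V_A`: `P_a(AR) = 0` iff `R = I` or `R = R_a(π,v)` for a
unit eigenvector `v` of `A`. -/
theorem stmt_6 (A : Matrix (Fin 3) (Fin 3) ℝ) (hA : Aᵀ = A)
    (hW : ∀ x : Fin 3 → ℝ, x ≠ 0 →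
      0 < x ⬝ᵥ ((A.trace • (1 : Matrix (Fin 3) (Fin 3) ℝ) - A) *ᵥ x))
    (R : Matrix (Fin 3) (Fin 3) ℝ) (hR : SO3 R) :
    (1 / 2 : ℝ) • (A * R - (A * R)ᵀ) = 0 ↔
      R = 1 ∨ ∃ (v : Fin 3 → ℝ) (lam : ℝ), v ⬝ᵥ v = 1 ∧ A *ᵥ v = lam • v ∧
        R = Ra Real.pi v := by
  rw [half_smul_sub_transpose_eq_zero_iff]
  constructor
  · intro hsymmAR
    have hAR : A * R = Rᵀ * A := by rw [← hsymmAR, transpose_mul, hA]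
    have hsymm : Rᵀ = R := transpose_eq_self_of_mul_eq_transpose_mul hA hW hR.1 hAR
    by_cases h1 : R = 1
    · exact Or.inl h1
    obtain ⟨u, hu, hRu⟩ := hR.exists_mulVec_eq_of_transpose_eq_self hsymm h1
    have hRa : R = Ra π u := mulVec_injective <| funext fun x => by rw [hRu, Ra_pi_mulVec hu]
    rw [hsymm, hRa] at hAR
    exact Or.inr ⟨u, _, hu, mulVec_eq_smul_of_commute_Ra_pi hu hAR, hRa⟩
  · rintro (rfl | ⟨v, lam, hv, hAv, rfl⟩)
    · rw [Matrix.mul_one, hA]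
    · exact transpose_mul_Ra_pi hA hv hAv
end
end

section
/- For any symmetric matrix A ∈ ℝ^{3×3}, R ∈ SO(3) with quaternion representation (η, ε), the vector ψ(AR) satisfies ψ(AR) = (ηI − [ε]_×) W ε, where W = tr(A)I − A. -/
open Matrix Real

noncomputable section

lemma skew_transpose (u : Fin 3 → ℝ) : (skew u)ᵀ = -skew u := by
  ext i j; fin_cases i <;> fin_cases j <;> simp [skew]

/-- `ψ(AR) = (ηI − [ε]ₓ) W ε` for symmetric `A` and `R` with quaternion `(η,ε)`. -/
theorem stmt_7 (A : Matrix (Fin 3) (Fin 3) ℝ) (hA : Aᵀ = A)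
    (η : ℝ) (ε : Fin 3 → ℝ) (hQ : η ^ 2 + ε ⬝ᵥ ε = 1)
    (R : Matrix (Fin 3) (Fin 3) ℝ)
    (hR : R = 1 + (2 : ℝ) • (skew ε * skew ε) + (2 * η) • skew ε)
    (W : Matrix (Fin 3) (Fin 3) ℝ) (hW : W = A.trace • (1 : Matrix (Fin 3) (Fin 3) ℝ) - A) :
    psiMap (A * R) = (η • (1 : Matrix (Fin 3) (Fin 3) ℝ) - skew ε) *ᵥ (W *ᵥ ε) := by
  subst hR hW
  have h10 : A 1 0 = A 0 1 := by nth_rewrite 2 [← hA]; rfl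
  have h20 : A 2 0 = A 0 2 := by nth_rewrite 2 [← hA]; rfl
  have h21 : A 2 1 = A 1 2 := by nth_rewrite 2 [← hA]; rfl
  funext i
  fin_cases i <;>
  · simp [psiMap, vex, skew, Matrix.mul_apply, Matrix.mulVec, dotProduct,
      Fin.sum_univ_three, Matrix.trace, Matrix.diag, Matrix.one_apply, Matrix.transpose_mul, Matrix.transpose_add, Matrix.transpose_smul, Matrix.transpose_one, skew_transpose, hA, Matrix.transpose_apply, Matrix.cons_val_zero, Matrix.cons_val_one, Matrix.head_cons, Matrix.cons_val_two, Matrix.tail_cons, Matrix.head_fin_const, Matrix.cons_val', Matrix.empty_val', Matrix.cons_val_fin_one, h10, h20, h21, Matrix.vecHead, Matrix.vecTail, Function.comp]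
    ring
end
end

section
/- Let A ∈ ℝ^{3×3} be symmetric with W = tr(A)I − A positive definite, with largest and smallest eigenvalues λ_max, λ_min of W and ξ = λ_min/λ_max. Then for every R ∈ SO(3), ‖ψ(AR)‖ ≤ λ_max · min{1, √(5 − 4ξ²)/2}. -/
open Matrix Real

noncomputable section

lemma psi_sq (M : Matrix (Fin 3) (Fin 3) ℝ) :
    psiMap M ⬝ᵥ psiMap M = ((Mᵀ * M).trace - (M * M).trace) / 4 := by
  simp [psiMap, vex, dotProduct, Matrix.trace_fin_three, Matrix.mul_apply,
    Fin.sum_univ_three, Matrix.sub_apply, Matrix.smul_apply, Matrix.transpose_apply]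
  ring

lemma adj_eq (B : Matrix (Fin 3) (Fin 3) ℝ) :
    B.adjugate = B * B - B.trace • B + (((B.trace)^2 - (B*B).trace)/2) • 1 := by
  rw [Matrix.adjugate_fin_three]
  ext i j
  fin_cases i <;> fin_cases j <;>
    · simp [Matrix.trace_fin_three, Matrix.mul_apply, Fin.sum_univ_three, Matrix.one_apply]
      ring

lemma newton (B : Matrix (Fin 3) (Fin 3) ℝ) :
    (B * B).trace = B.trace^2 - 2 * B.adjugate.trace := by
  rw [adj_eq]
  simp [Matrix.trace_add, Matrix.trace_sub, Matrix.trace_smul, Matrix.trace_one, smul_eq_mul]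
  ring

lemma dot_self_nonneg3 (v : Fin 3 → ℝ) : 0 ≤ v ⬝ᵥ v := by
  simp only [dotProduct, Fin.sum_univ_three]
  nlinarith [mul_self_nonneg (v 0), mul_self_nonneg (v 1), mul_self_nonneg (v 2)]

lemma dot_self_eq_zero3 (v : Fin 3 → ℝ) (h : v ⬝ᵥ v = 0) : v = 0 := by
  simp only [dotProduct, Fin.sum_univ_three] at h
  have z : ∀ a : ℝ, a * a ≤ 0 → a = 0 := fun a ha =>
    mul_self_eq_zero.mp (le_antisymm ha (mul_self_nonneg a))
  have z0 : v 0 = 0 := z _ (by nlinarith [mul_self_nonneg (v 1), mul_self_nonneg (v 2)])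
  have z1 : v 1 = 0 := z _ (by nlinarith [mul_self_nonneg (v 0), mul_self_nonneg (v 2)])
  have z2 : v 2 = 0 := z _ (by nlinarith [mul_self_nonneg (v 0), mul_self_nonneg (v 1)])
  funext i
  fin_cases i
  · exact z0
  · exact z1
  · exact z2

set_option maxHeartbeats 1000000 in
lemma tracePos (M P : Matrix (Fin 3) (Fin 3) ℝ) (hPt : Pᵀ = P)
    (hPP : P * P = P.trace • P) (ht : 0 ≤ P.trace)
    (hM : ∀ x : Fin 3 → ℝ, 0 ≤ x ⬝ᵥ (M *ᵥ x)) : 0 ≤ (M * P).trace := by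
  have e10 : P 1 0 = P 0 1 := by
    have := congrFun (congrFun hPt 0) 1; simpa [Matrix.transpose_apply] using this
  have e20 : P 2 0 = P 0 2 := by
    have := congrFun (congrFun hPt 0) 2; simpa [Matrix.transpose_apply] using this
  have e21 : P 2 1 = P 1 2 := by
    have := congrFun (congrFun hPt 1) 2; simpa [Matrix.transpose_apply] using this
  have key : (P * (M * P)).trace =
      (fun j => P j 0) ⬝ᵥ (M *ᵥ fun j => P j 0) +
      ((fun j => P j 1) ⬝ᵥ (M *ᵥ fun j => P j 1) +
      (fun j => P j 2) ⬝ᵥ (M *ᵥ fun j => P j 2)) := by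
    simp only [Matrix.trace_fin_three, Matrix.mul_apply, Matrix.mulVec, dotProduct,
      Fin.sum_univ_three]
    rw [e10, e20, e21]; ring
  have hq : 0 ≤ (P * (M * P)).trace := by
    rw [key]; exact add_nonneg (hM _) (add_nonneg (hM _) (hM _))
  have hc : (P * (M * P)).trace = P.trace * (M * P).trace := by
    rw [← Matrix.mul_assoc, Matrix.trace_mul_comm (P*M) P, ← Matrix.mul_assoc, hPP,
      Matrix.smul_mul, Matrix.trace_smul, smul_eq_mul, Matrix.trace_mul_comm]
  rcases eq_or_lt_of_le ht with h|h
  · have hP0 : P * P = 0 := by rw [hPP, ← h, zero_smul]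
    have htr := congrArg Matrix.trace hP0
    simp only [Matrix.trace_fin_three, Matrix.mul_apply, Fin.sum_univ_three,
      Matrix.trace_zero, Matrix.zero_apply] at htr
    rw [e10, e20, e21] at htr
    have z : ∀ a : ℝ, a * a ≤ 0 → a = 0 := fun a ha =>
      mul_self_eq_zero.mp (le_antisymm ha (mul_self_nonneg a))
    have z00 : P 0 0 = 0 := by
      apply z; nlinarith [mul_self_nonneg (P 0 1), mul_self_nonneg (P 0 2),
        mul_self_nonneg (P 1 1), mul_self_nonneg (P 1 2), mul_self_nonneg (P 2 2)]
    have z01 : P 0 1 = 0 := by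
      apply z; nlinarith [mul_self_nonneg (P 0 0), mul_self_nonneg (P 0 2),
        mul_self_nonneg (P 1 1), mul_self_nonneg (P 1 2), mul_self_nonneg (P 2 2)]
    have z02 : P 0 2 = 0 := by
      apply z; nlinarith [mul_self_nonneg (P 0 0), mul_self_nonneg (P 0 1),
        mul_self_nonneg (P 1 1), mul_self_nonneg (P 1 2), mul_self_nonneg (P 2 2)]
    have z11 : P 1 1 = 0 := by
      apply z; nlinarith [mul_self_nonneg (P 0 0), mul_self_nonneg (P 0 1),
        mul_self_nonneg (P 0 2), mul_self_nonneg (P 1 2), mul_self_nonneg (P 2 2)]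
    have z12 : P 1 2 = 0 := by
      apply z; nlinarith [mul_self_nonneg (P 0 0), mul_self_nonneg (P 0 1),
        mul_self_nonneg (P 0 2), mul_self_nonneg (P 1 1), mul_self_nonneg (P 2 2)]
    have z22 : P 2 2 = 0 := by
      apply z; nlinarith [mul_self_nonneg (P 0 0), mul_self_nonneg (P 0 1),
        mul_self_nonneg (P 0 2), mul_self_nonneg (P 1 1), mul_self_nonneg (P 1 2)]
    have hPz : P = 0 := by
      ext i j
      fin_cases i <;> fin_cases j
      · exact z00
      · exact z01
      · exact z02
      · exact e10.trans z01
      · exact z11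
      · exact z12
      · exact e20.trans z02
      · exact e21.trans z12
      · exact z22
    rw [hPz, Matrix.mul_zero, Matrix.trace_zero]
  · have h2 : 0 ≤ P.trace * (M * P).trace := hc ▸ hq
    by_contra hn
    push_neg at hn
    nlinarith [mul_pos h (neg_pos.mpr hn)]

set_option maxHeartbeats 1000000 in
/-- `‖ψ(AR)‖ ≤ λ_max min{1, √(5−4ξ²)/2}` for all `R ∈ SO(3)`. -/
theorem stmt_8 (A : Matrix (Fin 3) (Fin 3) ℝ) (hA : Aᵀ = A)
    (W : Matrix (Fin 3) (Fin 3) ℝ) (hW : W = A.trace • (1 : Matrix (Fin 3) (Fin 3) ℝ) - A)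
    (lmin lmax : ℝ) (hpos : 0 < lmin)
    (hmin : ∀ x : Fin 3 → ℝ, lmin * (x ⬝ᵥ x) ≤ x ⬝ᵥ (W *ᵥ x))
    (hmax : ∀ x : Fin 3 → ℝ, x ⬝ᵥ (W *ᵥ x) ≤ lmax * (x ⬝ᵥ x))
    (hev_min : ∃ x : Fin 3 → ℝ, x ≠ 0 ∧ W *ᵥ x = lmin • x)
    (hev_max : ∃ x : Fin 3 → ℝ, x ≠ 0 ∧ W *ᵥ x = lmax • x)
    (R : Matrix (Fin 3) (Fin 3) ℝ) (hR : SO3 R) :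
    Real.sqrt (psiMap (A * R) ⬝ᵥ psiMap (A * R)) ≤
      lmax * min 1 (Real.sqrt (5 - 4 * (lmin / lmax) ^ 2) / 2) := by
  obtain ⟨hRO, hRdet⟩ := hR
  have hRO' : Rᵀ * R = 1 := mul_eq_one_comm.mp hRO
  have hWt : Wᵀ = W := by
    rw [hW, Matrix.transpose_sub, Matrix.transpose_smul, Matrix.transpose_one, hA]
  -- lmin ≤ lmax, lmax > 0
  have hxx : (![1,0,0] : Fin 3 → ℝ) ⬝ᵥ ![1,0,0] = 1 := by
    simp [dotProduct, Fin.sum_univ_three]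
  have hmm : lmin ≤ lmax := by
    have h1 := hmin ![1,0,0]
    have h2 := hmax ![1,0,0]
    rw [hxx] at h1 h2
    linarith
  have hlmax : 0 < lmax := lt_of_lt_of_le hpos hmm
  -- symmetry of bilinear form
  have hsymdot : ∀ u v : Fin 3 → ℝ, u ⬝ᵥ (W *ᵥ v) = (W *ᵥ u) ⬝ᵥ v := by
    intro u v
    rw [Matrix.dotProduct_mulVec, ← Matrix.mulVec_transpose, hWt]
  have hWnn : ∀ x : Fin 3 → ℝ, 0 ≤ x ⬝ᵥ (W *ᵥ x) := fun x =>
    le_trans (mul_nonneg hpos.le (dot_self_nonneg3 x)) (hmin x)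
  -- key operator inequality  W² ≼ lmax W  (pointwise)
  have key2 : ∀ x : Fin 3 → ℝ, (W *ᵥ x) ⬝ᵥ (W *ᵥ x) ≤ lmax * (x ⬝ᵥ (W *ᵥ x)) := by
    intro x
    rcases eq_or_ne (W *ᵥ x) 0 with h0 | h0
    · have hz0 : (W *ᵥ x) ⬝ᵥ (W *ᵥ x) = 0 := by rw [h0]; simp
      rw [hz0]
      exact mul_nonneg hlmax.le (hWnn x)
    · set y := W *ᵥ x with hy
      have hyy : 0 < y ⬝ᵥ y :=
        (dot_self_nonneg3 y).lt_of_ne (fun h => h0 (dot_self_eq_zero3 y h.symm))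
      have hc1pos : 0 < y ⬝ᵥ (W *ᵥ y) :=
        lt_of_lt_of_le (mul_pos hpos hyy) (hmin y)
      have hxWy : x ⬝ᵥ (W *ᵥ y) = y ⬝ᵥ y := by rw [hsymdot x y]
      have hyWx : y ⬝ᵥ (W *ᵥ x) = y ⬝ᵥ y := by rw [← hy]
      have hWyy := hmax y
      -- Cauchy-Schwarz via the nonneg vector z
      have hz : 0 ≤ ((y ⬝ᵥ (W *ᵥ y)) • x - (y ⬝ᵥ y) • y) ⬝ᵥ
          (W *ᵥ ((y ⬝ᵥ (W *ᵥ y)) • x - (y ⬝ᵥ y) • y)) := hWnn _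
      rw [Matrix.mulVec_sub, Matrix.mulVec_smul, Matrix.mulVec_smul,
        sub_dotProduct, smul_dotProduct, smul_dotProduct,
        dotProduct_sub, dotProduct_sub, dotProduct_smul,
        dotProduct_smul, dotProduct_smul, dotProduct_smul,
        hxWy, hyWx] at hz
      simp only [smul_eq_mul] at hz
      have hCS : (y ⬝ᵥ y) * (y ⬝ᵥ y) ≤ (x ⬝ᵥ (W *ᵥ x)) * (y ⬝ᵥ (W *ᵥ y)) := by
        nlinarith [hz, hc1pos]
      nlinarith [hCS, hyy, hWnn x, mul_le_mul_of_nonneg_left hWyy (hWnn x)]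
  -- the matrix P
  have hadj : R.adjugate = Rᵀ := by
    have h1 : R.adjugate * (R * Rᵀ) = R.adjugate := by rw [hRO, Matrix.mul_one]
    rw [← Matrix.mul_assoc, Matrix.adjugate_mul, hRdet, one_smul, Matrix.one_mul] at h1
    exact h1.symm
  have h2 := adj_eq R
  rw [hadj] at h2
  have htr2 := congrArg Matrix.trace h2
  simp only [Matrix.trace_transpose, Matrix.trace_add, Matrix.trace_sub, Matrix.trace_smul,
    Matrix.trace_one, smul_eq_mul, Fintype.card_fin, Nat.cast_ofNat] at htr2
  have he : ((R.trace)^2 - (R*R).trace)/2 = R.trace := by linear_combination -htr2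
  rw [he] at h2
  have e1 : R * R = Rᵀ + R.trace • R - R.trace • 1 := by rw [h2]; module
  have eT : Rᵀ * Rᵀ = R + R.trace • Rᵀ - R.trace • 1 := by
    calc Rᵀ * Rᵀ = (R * R)ᵀ := by rw [Matrix.transpose_mul]
    _ = (Rᵀ + R.trace • R - R.trace • 1)ᵀ := by rw [← e1]
    _ = R + R.trace • Rᵀ - R.trace • 1 := by
        simp [Matrix.transpose_add, Matrix.transpose_sub, Matrix.transpose_smul,
          Matrix.transpose_one, Matrix.transpose_transpose]
  set P : Matrix (Fin 3) (Fin 3) ℝ :=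
    (1/4 : ℝ) • (R + Rᵀ + (1 - R.trace) • 1) with hPdef
  have hQQ : (R + Rᵀ + (1 - R.trace) • (1 : Matrix (Fin 3) (Fin 3) ℝ)) *
      (R + Rᵀ + (1 - R.trace) • 1) = (3 - R.trace) • (R + Rᵀ + (1 - R.trace) • 1) := by
    simp only [Matrix.add_mul, Matrix.mul_add, Matrix.smul_mul, Matrix.mul_smul,
      Matrix.one_mul, Matrix.mul_one, smul_smul]
    rw [hRO, hRO', e1, eT]
    module
  have hPt : Pᵀ = P := by
    rw [hPdef]
    simp only [Matrix.transpose_smul, Matrix.transpose_add, Matrix.transpose_one,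
      Matrix.transpose_transpose]
    module
  have htP : P.trace = (3 - R.trace)/4 := by
    rw [hPdef]
    simp only [Matrix.trace_smul, Matrix.trace_add, Matrix.trace_transpose,
      Matrix.trace_one, Fintype.card_fin, Nat.cast_ofNat, smul_eq_mul]
    ring
  have hPP : P * P = P.trace • P := by
    rw [htP, hPdef, Matrix.smul_mul, Matrix.mul_smul, smul_smul, hQQ, smul_smul, smul_smul]
    congr 1
    ring
  have htPn : 0 ≤ P.trace := by
    rw [htP]
    have d0 := congrFun (congrFun hRO 0) 0
    have d1 := congrFun (congrFun hRO 1) 1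
    have d2 := congrFun (congrFun hRO 2) 2
    simp only [Matrix.mul_apply, Fin.sum_univ_three, Matrix.one_apply,
      Matrix.transpose_apply, if_true, eq_self_iff_true] at d0 d1 d2
    rw [Matrix.trace_fin_three]
    norm_num at d0 d1 d2 ⊢
    nlinarith [d0, d1, d2, sq_nonneg (R 0 0 - 1), sq_nonneg (R 1 1 - 1), sq_nonneg (R 2 2 - 1),
      mul_self_nonneg (R 0 1), mul_self_nonneg (R 0 2), mul_self_nonneg (R 1 0),
      mul_self_nonneg (R 1 2), mul_self_nonneg (R 2 0), mul_self_nonneg (R 2 1)]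
  -- trace positivity
  have hμ0 : 0 ≤ (W * P).trace := tracePos W P hPt hPP htPn hWnn
  have hMnn : ∀ x : Fin 3 → ℝ, 0 ≤ x ⬝ᵥ ((lmax • W - W * W) *ᵥ x) := by
    intro x
    rw [Matrix.sub_mulVec, Matrix.smul_mulVec, dotProduct_sub,
      dotProduct_smul, ← Matrix.mulVec_mulVec, hsymdot x (W *ᵥ x)]
    simp only [smul_eq_mul]
    linarith [key2 x]
  have hsub : 0 ≤ ((lmax • W - W * W) * P).trace := tracePos _ P hPt hPP htPn hMnn
  have hlin : ((lmax • W - W * W) * P).trace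
      = lmax * (W * P).trace - (W * W * P).trace := by
    rw [Matrix.sub_mul, Matrix.smul_mul, Matrix.trace_sub, Matrix.trace_smul, smul_eq_mul]
  rw [hlin] at hsub
  -- trace identities
  have htARt : (A * Rᵀ).trace = (A * R).trace := by
    conv_lhs => rw [← Matrix.trace_transpose, Matrix.transpose_mul,
      Matrix.transpose_transpose, hA]
    exact Matrix.trace_mul_comm R A
  have htA2Rt : (A * A * Rᵀ).trace = (A * A * R).trace := by
    conv_lhs => rw [← Matrix.trace_transpose, Matrix.transpose_mul, Matrix.transpose_mul,
      Matrix.transpose_transpose, hA]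
    exact Matrix.trace_mul_comm R (A * A)
  have htW : W.trace = 2 * A.trace := by
    rw [hW, Matrix.trace_sub, Matrix.trace_smul, Matrix.trace_one]
    simp only [Fintype.card_fin, Nat.cast_ofNat, smul_eq_mul]
    ring
  have htWR : (W * R).trace = A.trace * R.trace - (A * R).trace := by
    rw [hW, Matrix.sub_mul, Matrix.smul_mul, Matrix.one_mul, Matrix.trace_sub,
      Matrix.trace_smul, smul_eq_mul]
  have htWRt : (W * Rᵀ).trace = A.trace * R.trace - (A * R).trace := by
    rw [hW, Matrix.sub_mul, Matrix.smul_mul, Matrix.one_mul, Matrix.trace_sub,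
      Matrix.trace_smul, smul_eq_mul, Matrix.trace_transpose, htARt]
  have hW2 : W * W = (A.trace * A.trace) • (1 : Matrix (Fin 3) (Fin 3) ℝ)
      - (2 * A.trace) • A + A * A := by
    rw [hW]
    simp only [Matrix.sub_mul, Matrix.mul_sub, Matrix.smul_mul, Matrix.mul_smul,
      Matrix.one_mul, Matrix.mul_one, smul_smul]
    module
  have htW2R : (W * W * R).trace = A.trace * A.trace * R.trace
      - 2 * A.trace * (A * R).trace + (A * A * R).trace := by
    rw [hW2, Matrix.add_mul, Matrix.sub_mul, Matrix.smul_mul, Matrix.smul_mul,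
      Matrix.one_mul, Matrix.trace_add, Matrix.trace_sub, Matrix.trace_smul,
      Matrix.trace_smul]
    simp only [smul_eq_mul]
    try ring
  have htW2Rt : (W * W * Rᵀ).trace = A.trace * A.trace * R.trace
      - 2 * A.trace * (A * R).trace + (A * A * R).trace := by
    rw [hW2, Matrix.add_mul, Matrix.sub_mul, Matrix.smul_mul, Matrix.smul_mul,
      Matrix.one_mul, Matrix.trace_add, Matrix.trace_sub, Matrix.trace_smul,
      Matrix.trace_smul, Matrix.trace_transpose, htARt, htA2Rt]
    simp only [smul_eq_mul]
    try ring
  have htrW2 : (W * W).trace = A.trace * A.trace + (A * A).trace := by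
    rw [hW2, Matrix.trace_add, Matrix.trace_sub, Matrix.trace_smul, Matrix.trace_smul,
      Matrix.trace_one]
    simp only [Fintype.card_fin, Nat.cast_ofNat, smul_eq_mul]
    ring
  have hWP : W * P = (1/4 : ℝ) • (W * R + W * Rᵀ + (1 - R.trace) • W) := by
    rw [hPdef, Matrix.mul_smul, Matrix.mul_add, Matrix.mul_add, Matrix.mul_smul,
      Matrix.mul_one]
  have hμ : (W * P).trace = (A.trace - (A * R).trace) / 2 := by
    rw [hWP, Matrix.trace_smul, Matrix.trace_add, Matrix.trace_add, Matrix.trace_smul,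
      htWR, htWRt, htW]
    simp only [smul_eq_mul]
    try ring
  have hW2P : W * W * P = (1/4 : ℝ) • (W * W * R + W * W * Rᵀ
      + (1 - R.trace) • (W * W)) := by
    rw [hPdef, Matrix.mul_smul, Matrix.mul_add, Matrix.mul_add, Matrix.mul_smul,
      Matrix.mul_one]
  have hν : (W * W * P).trace = (2 * (A.trace * A.trace * R.trace
      - 2 * A.trace * (A * R).trace + (A * A * R).trace)
      + (1 - R.trace) * (A.trace * A.trace + (A * A).trace)) / 4 := by
    rw [hW2P, Matrix.trace_smul, Matrix.trace_add, Matrix.trace_add, Matrix.trace_smul,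
      htW2R, htW2Rt, htrW2]
    simp only [smul_eq_mul]
    try ring
  -- the squared norm of psi
  have hL1tr : ((A * R)ᵀ * (A * R)).trace = (A * A).trace := by
    rw [Matrix.transpose_mul, hA, Matrix.trace_mul_cycle Rᵀ A (A * R),
      mul_assoc A R Rᵀ, hRO, mul_one]
  have hL2 : ((A * R) * (A * R)).trace = (A * R).trace^2 - 2 * ((A * A * R).trace
      - A.trace * (A * R).trace + ((A.trace^2 - (A * A).trace)/2) * R.trace) := by
    rw [newton (A * R), Matrix.adjugate_mul_distrib, hadj, adj_eq A,
      Matrix.mul_add, Matrix.mul_sub, Matrix.mul_smul, Matrix.mul_smul, Matrix.mul_one,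
      Matrix.trace_add, Matrix.trace_sub, Matrix.trace_smul, Matrix.trace_smul,
      Matrix.trace_transpose, Matrix.trace_mul_comm Rᵀ (A * A),
      Matrix.trace_mul_comm Rᵀ A, htA2Rt, htARt]
    simp only [smul_eq_mul]
    try ring
  have hψ : psiMap (A * R) ⬝ᵥ psiMap (A * R)
      = (W * W * P).trace - ((W * P).trace)^2 := by
    rw [psi_sq, hL1tr, hL2, hμ, hν]
    ring
  -- final numeric bound
  have hbound : psiMap (A * R) ⬝ᵥ psiMap (A * R) ≤ (lmax / 2)^2 := by
    nlinarith [hψ, hμ0, hsub, sq_nonneg (lmax / 2 - (W * P).trace)]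
  have hsqrt : Real.sqrt (psiMap (A * R) ⬝ᵥ psiMap (A * R)) ≤ lmax / 2 := by
    calc Real.sqrt (psiMap (A * R) ⬝ᵥ psiMap (A * R))
        ≤ Real.sqrt ((lmax / 2)^2) := Real.sqrt_le_sqrt hbound
    _ = lmax / 2 := Real.sqrt_sq (by positivity)
  refine hsqrt.trans ?_
  have hξ : (lmin / lmax)^2 ≤ 1 := by
    rw [div_pow, div_le_one (by positivity)]
    nlinarith [hmm, hpos]
  have h5 : 1 ≤ Real.sqrt (5 - 4 * (lmin / lmax)^2) := by
    have h51 : (1:ℝ) ≤ 5 - 4 * (lmin / lmax)^2 := by linarith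
    have := Real.sqrt_le_sqrt h51
    simpa using this
  have hmin2 : (1:ℝ)/2 ≤ min 1 (Real.sqrt (5 - 4 * (lmin / lmax)^2) / 2) :=
    le_min (by norm_num) (by linarith)
  nlinarith [mul_le_mul_of_nonneg_left hmin2 hlmax.le]
end
end

section
/- Let A = Aᵀ with W = tr(A)I − A positive definite. Then for all R ∈ SO(3), V_A(R) = tr(A(I−R)) satisfies 0 ≤ V_A(R) ≤ 2 λ_max(W), where λ_max(W) is the largest eigenvalue of W. -/
open Matrix Real

noncomputable section

/-!
Write `t = tr R` and `P = (1 - t) I + R + Rᵀ`. On `SO(3)` Cayley–Hamilton together with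
`adj R = Rᵀ` gives `R² = Rᵀ + t R - t I`, hence `P² = (3 - t) P`: `P` is `3 - t` times the
orthogonal projection onto the rotation axis. As `A = ½ tr(W) I - W`, one finds
`2 V_A(R) = tr(W P)`, and `0 ≤ tr(W P) ≤ λ_max(W) tr P = λ_max(W) (3 - t) ≤ 4 λ_max(W)`
since `-1 ≤ t ≤ 3`.
-/

namespace Matrix

variable {n : Type*} [Fintype n]

lemma PosSemidef.of_transpose_eq {X : Matrix n n ℝ} (hX : Xᵀ = X)
    (h : ∀ x, 0 ≤ x ⬝ᵥ (X *ᵥ x)) : X.PosSemidef :=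
  .of_dotProduct_mulVec_nonneg (by rwa [IsHermitian, conjTranspose_eq_transpose_of_trivial]) h

lemma trace_mul_nonneg_of_mul_self_eq_smul {X P : Matrix n n ℝ} (hX : X.PosSemidef)
    (hP : Pᵀ = P) {c : ℝ} (hc : 0 ≤ c) (hPP : P * P = c • P) : 0 ≤ (X * P).trace := by
  rw [← conjTranspose_eq_transpose_of_trivial] at hP
  rcases hc.eq_or_lt with rfl | hc
  · have : P = 0 := conjTranspose_mul_self_eq_zero.mp (by rw [hP, hPP, zero_smul])
    simp [this]
  · have key : (Pᴴ * X * P).trace = c * (X * P).trace := by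
      rw [hP, trace_mul_comm, ← Matrix.mul_assoc, hPP, smul_mul_assoc, trace_smul, smul_eq_mul,
        trace_mul_comm]
    exact (mul_nonneg_iff_of_pos_left hc).mp
      (key ▸ (hX.conjTranspose_mul_mul_same P).trace_nonneg)

variable [DecidableEq n] {R : Matrix n n ℝ}

lemma trace_le_card_of_mul_transpose_eq_one (hR : R * Rᵀ = 1) : R.trace ≤ Fintype.card n := by
  have := (posSemidef_self_mul_conjTranspose (1 - R)).trace_nonneg
  simp only [conjTranspose_eq_transpose_of_trivial, transpose_sub, transpose_one, Matrix.sub_mul,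
    Matrix.mul_sub, Matrix.one_mul, Matrix.mul_one, hR, trace_sub, trace_one, trace_transpose] at this
  linarith

end Matrix

lemma smul_one_sub_mul_self {K A : Type*} [CommRing K] [Ring A] [Algebra K A] {p : A} {c : K}
    (h : p * p = c • p) : (c • 1 - p) * (c • 1 - p) = c • (c • 1 - p) := by
  simp only [sub_mul, mul_sub, smul_mul_assoc, mul_smul_comm, one_mul, mul_one, h]
  module

lemma Matrix.adjugate_fin_three_eq {α : Type*} [CommRing α] (M : Matrix (Fin 3) (Fin 3) α) :
    M.adjugate = M * M - M.trace • M + M.adjugate.trace • 1 := by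
  ext i j
  fin_cases i <;> fin_cases j <;>
    simp [adjugate_fin_three, trace_fin_three, mul_apply, Fin.sum_univ_three] <;> ring

def axisMatrix (R : Matrix (Fin 3) (Fin 3) ℝ) : Matrix (Fin 3) (Fin 3) ℝ :=
  (1 - R.trace) • 1 + R + Rᵀ

lemma transpose_axisMatrix (R : Matrix (Fin 3) (Fin 3) ℝ) : (axisMatrix R)ᵀ = axisMatrix R := by
  simp only [axisMatrix, transpose_add, transpose_smul, transpose_one, transpose_transpose]
  abel

lemma trace_axisMatrix (R : Matrix (Fin 3) (Fin 3) ℝ) : (axisMatrix R).trace = 3 - R.trace := by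
  simp only [axisMatrix, trace_add, trace_smul, trace_one, trace_transpose, Fintype.card_fin,
    smul_eq_mul]
  ring

lemma two_mul_trace_mul_one_sub_eq {A : Matrix (Fin 3) (Fin 3) ℝ} (hA : Aᵀ = A)
    (R : Matrix (Fin 3) (Fin 3) ℝ) :
    2 * (A * (1 - R)).trace = ((A.trace • 1 - A) * axisMatrix R).trace := by
  have hRt : (A * Rᵀ).trace = (A * R).trace := by
    rw [← trace_transpose, transpose_mul, transpose_transpose, hA, trace_mul_comm]
  simp only [axisMatrix, Matrix.mul_sub, Matrix.sub_mul, Matrix.mul_add, Matrix.mul_one,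
    smul_mul_assoc, mul_smul_comm, Matrix.one_mul, trace_sub, trace_add, trace_smul, trace_one,
    trace_transpose, hRt, Fintype.card_fin, smul_eq_mul]
  ring

namespace SO3

variable {R : Matrix (Fin 3) (Fin 3) ℝ}

lemma adjugate_eq_transpose_s9 (hR : SO3 R) : R.adjugate = Rᵀ := by
  rw [← inv_eq_right_inv hR.1, inv_def, hR.2]
  simp

lemma mul_self_eq (hR : SO3 R) : R * R = Rᵀ + R.trace • R - R.trace • 1 := by
  have h := R.adjugate_fin_three_eq
  rw [hR.adjugate_eq_transpose_s9, trace_transpose] at h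
  rw [h]
  abel

lemma axisMatrix_mul_self (hR : SO3 R) :
    axisMatrix R * axisMatrix R = (3 - R.trace) • axisMatrix R := by
  have hRR := hR.mul_self_eq
  have hRtRt : Rᵀ * Rᵀ = R + R.trace • Rᵀ - R.trace • 1 := by
    simpa [transpose_mul] using congrArg transpose hRR
  have hRtR : Rᵀ * R = 1 := mul_eq_one_comm.mp hR.1
  simp only [axisMatrix, Matrix.add_mul, Matrix.mul_add, smul_mul_assoc, mul_smul_comm,
    Matrix.one_mul, Matrix.mul_one, hRR, hRtRt, hR.1, hRtR]
  module

lemma neg_one_le_trace (hR : SO3 R) : -1 ≤ R.trace := by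
  have hc : 0 ≤ 3 - R.trace := by simpa using trace_le_card_of_mul_transpose_eq_one hR.1
  have hP := hR.axisMatrix_mul_self
  have hN : (1 + R) * (1 + R)ᵀ = (1 + R.trace) • 1 + axisMatrix R := by
    simp only [axisMatrix, transpose_add, transpose_one, Matrix.add_mul, Matrix.mul_add,
      Matrix.one_mul, Matrix.mul_one, hR.1]
    module
  have hM : ((3 - R.trace) • 1 - axisMatrix R)ᵀ = (3 - R.trace) • 1 - axisMatrix R := by
    rw [transpose_sub, transpose_smul, transpose_one, transpose_axisMatrix]
  -- `(1 + R)(1 + R)ᵀ` and `(1 - R)(1 - R)ᵀ = (3 - t) I - P` are positive semidefinite, and the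
  -- trace of their product is `2 (3 - t) (1 + t)`.
  have := trace_mul_nonneg_of_mul_self_eq_smul (posSemidef_self_mul_conjTranspose (1 + R)) hM hc
    (smul_one_sub_mul_self hP)
  simp only [conjTranspose_eq_transpose_of_trivial, hN, Matrix.add_mul, Matrix.mul_sub,
    smul_mul_assoc, mul_smul_comm, Matrix.one_mul, Matrix.mul_one, hP, trace_add, trace_sub,
    trace_smul, trace_one, trace_axisMatrix, Fintype.card_fin, Nat.cast_ofNat, smul_eq_mul] at this
  nlinarith

end SO3

theorem stmt_9_general (A : Matrix (Fin 3) (Fin 3) ℝ) (hA : Aᵀ = A)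
    (W : Matrix (Fin 3) (Fin 3) ℝ) (hW : W = A.trace • (1 : Matrix (Fin 3) (Fin 3) ℝ) - A)
    (hposdef : ∀ x : Fin 3 → ℝ, x ≠ 0 → 0 < x ⬝ᵥ (W *ᵥ x))
    (lmax : ℝ)
    (hmax : ∀ x : Fin 3 → ℝ, x ⬝ᵥ (W *ᵥ x) ≤ lmax * (x ⬝ᵥ x))
    (R : Matrix (Fin 3) (Fin 3) ℝ) (hR : SO3 R) :
    0 ≤ (A * (1 - R)).trace ∧ (A * (1 - R)).trace ≤ 2 * lmax := by
  have hWt : Wᵀ = W := by simp [hW, hA]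
  have hWpsd : W.PosSemidef := PosSemidef.of_transpose_eq hWt fun x => by
    rcases eq_or_ne x 0 with rfl | hx
    · simp
    · exact (hposdef x hx).le
  have hWle : (lmax • 1 - W).PosSemidef := PosSemidef.of_transpose_eq (by simp [hWt]) fun x => by
    simpa [sub_mulVec, smul_mulVec, dotProduct_sub, dotProduct_smul] using hmax x
  have hlmax : 0 ≤ lmax := by
    simpa using (hWpsd.dotProduct_mulVec_nonneg (Pi.single 0 1)).trans (hmax (Pi.single 0 1))
  have hc0 : 0 ≤ 3 - R.trace := by
    simpa using trace_le_card_of_mul_transpose_eq_one hR.1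
  have hc4 : 3 - R.trace ≤ 4 := by
    linarith [hR.neg_one_le_trace]
  have hP := hR.axisMatrix_mul_self
  have hWP := trace_mul_nonneg_of_mul_self_eq_smul hWpsd (transpose_axisMatrix R) hc0 hP
  have hWP_le := trace_mul_nonneg_of_mul_self_eq_smul hWle (transpose_axisMatrix R) hc0 hP
  rw [Matrix.sub_mul, trace_sub, smul_mul_assoc, Matrix.one_mul, trace_smul, trace_axisMatrix,
    smul_eq_mul] at hWP_le
  have hV := two_mul_trace_mul_one_sub_eq hA R
  rw [← hW] at hV
  constructor <;> nlinarith

/-- `0 ≤ V_A(R) ≤ 2 λ_max(W)` on `SO(3)`. -/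
theorem stmt_9 (A : Matrix (Fin 3) (Fin 3) ℝ) (hA : Aᵀ = A)
    (W : Matrix (Fin 3) (Fin 3) ℝ) (hW : W = A.trace • (1 : Matrix (Fin 3) (Fin 3) ℝ) - A)
    (hposdef : ∀ x : Fin 3 → ℝ, x ≠ 0 → 0 < x ⬝ᵥ (W *ᵥ x))
    (lmax : ℝ)
    (hmax : ∀ x : Fin 3 → ℝ, x ⬝ᵥ (W *ᵥ x) ≤ lmax * (x ⬝ᵥ x))
    (hev_max : ∃ x : Fin 3 → ℝ, x ≠ 0 ∧ W *ᵥ x = lmax • x)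
    (R : Matrix (Fin 3) (Fin 3) ℝ) (hR : SO3 R) :
    0 ≤ (A * (1 - R)).trace ∧ (A * (1 - R)).trace ≤ 2 * lmax :=
  stmt_9_general A hA W hW hposdef lmax hmax R hR
end
end

section
/- Let r₁,…,r_n ∈ ℝ³, ρ₁,…,ρ_n > 0, A = Σᵢ ρᵢ rᵢrᵢᵀ, and R, P ∈ SO(3) with bᵢ = Rᵀ rᵢ. Then ψ(A R Pᵀ) = (1/2) P Σᵢ ρᵢ (bᵢ × Pᵀ rᵢ), where ψ(M) = vex((M − Mᵀ)/2). -/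
open Matrix Real

noncomputable section

/-!
Multiplying `rᵢ rᵢᵀ` on the right by `R Pᵀ` gives `rᵢ (P Rᵀ rᵢ)ᵀ`, so `A R Pᵀ = Σᵢ ρᵢ rᵢ (P bᵢ)ᵀ`.
The map `ψ` is linear and sends the rank-one matrix `x yᵀ` to `½ y × x`. A rotation commutes with
the cross product, `P (u × v) = P u × P v` (because `adj Pᵀ = P` for `P ∈ SO(3)`), hence
`P (bᵢ × Pᵀ rᵢ) = P bᵢ × rᵢ`, which matches term by term.
-/

def psiMapₗ : Matrix (Fin 3) (Fin 3) ℝ →ₗ[ℝ] Fin 3 → ℝ where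
  toFun := psiMap
  map_add' M N := by
    ext k
    fin_cases k <;> simp [psiMap, vex] <;> ring
  map_smul' c M := by
    ext k
    fin_cases k <;> simp [psiMap, vex] <;> ring

theorem psiMap_sum_smul {ι : Type*} (s : Finset ι) (c : ι → ℝ)
    (M : ι → Matrix (Fin 3) (Fin 3) ℝ) :
    psiMap (∑ i ∈ s, c i • M i) = ∑ i ∈ s, c i • psiMap (M i) :=
  (map_sum psiMapₗ _ s).trans (Finset.sum_congr rfl fun i _ => map_smul psiMapₗ (c i) (M i))

theorem psiMap_vecMulVec (x y : Fin 3 → ℝ) :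
    psiMap (vecMulVec x y) = (1 / 2 : ℝ) • cross3 y x := by
  ext k
  fin_cases k <;> simp [psiMap, vex, cross3, vecMulVec_apply] <;> ring

theorem cross3_mulVec (M : Matrix (Fin 3) (Fin 3) ℝ) (u v : Fin 3 → ℝ) :
    cross3 (M *ᵥ u) (M *ᵥ v) = Mᵀ.adjugate *ᵥ cross3 u v := by
  ext k
  fin_cases k <;>
    simp [cross3, adjugate_fin_three, mulVec, dotProduct, Fin.sum_univ_three] <;> ring

namespace SO3

variable {P : Matrix (Fin 3) (Fin 3) ℝ}

theorem transpose_mul_self (hP : SO3 P) : Pᵀ * P = 1 :=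
  mul_eq_one_comm.mp hP.1

theorem transpose (hP : SO3 P) : SO3 Pᵀ :=
  ⟨by rw [transpose_transpose, hP.transpose_mul_self], by rw [det_transpose, hP.2]⟩

theorem adjugate_eq_transpose_s13 (hP : SO3 P) : P.adjugate = Pᵀ :=
  calc P.adjugate = Pᵀ * P * P.adjugate := by rw [hP.transpose_mul_self, Matrix.one_mul]
    _ = Pᵀ := by rw [Matrix.mul_assoc, mul_adjugate, hP.2, one_smul, Matrix.mul_one]

theorem mulVec_cross3 (hP : SO3 P) (u v : Fin 3 → ℝ) :
    P *ᵥ cross3 u v = cross3 (P *ᵥ u) (P *ᵥ v) := by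
  rw [cross3_mulVec, hP.transpose.adjugate_eq_transpose_s13, transpose_transpose]

end SO3

theorem vecMulVec_mul_mul_transpose {α l m n k : Type*} [CommSemiring α] [Fintype m] [Fintype n]
    (x : l → α) (y : m → α) (R : Matrix m n α) (P : Matrix k n α) :
    vecMulVec x y * R * Pᵀ = vecMulVec x (P *ᵥ (Rᵀ *ᵥ y)) := by
  rw [vecMulVec_mul, vecMulVec_mul, vecMul_transpose, mulVec_transpose]

theorem stmt_13_general (n : ℕ) (r : Fin n → (Fin 3 → ℝ)) (ρ : Fin n → ℝ)
    (A : Matrix (Fin 3) (Fin 3) ℝ) (hAdef : A = ∑ i, ρ i • vecMulVec (r i) (r i))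
    (R P : Matrix (Fin 3) (Fin 3) ℝ) (hP : SO3 P)
    (b : Fin n → (Fin 3 → ℝ)) (hb : ∀ i, b i = Rᵀ *ᵥ r i) :
    psiMap (A * R * Pᵀ) =
      (1 / 2 : ℝ) • (P *ᵥ ∑ i, ρ i • cross3 (b i) (Pᵀ *ᵥ r i)) := by
  have hA : A * R * Pᵀ = ∑ i, ρ i • vecMulVec (r i) (P *ᵥ b i) := by
    simp only [hAdef, Finset.sum_mul, Matrix.smul_mul, vecMulVec_mul_mul_transpose, hb]
  rw [hA, psiMap_sum_smul, mulVec_sum, Finset.smul_sum]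
  refine Finset.sum_congr rfl fun i _ => ?_
  rw [psiMap_vecMulVec, mulVec_smul, hP.mulVec_cross3, mulVec_mulVec, hP.1, one_mulVec, smul_comm]

/-- `ψ(ARPᵀ) = (1/2) P Σ ρᵢ (bᵢ × Pᵀrᵢ)` with `bᵢ = Rᵀrᵢ`. -/
theorem stmt_13 (n : ℕ) (r : Fin n → (Fin 3 → ℝ)) (ρ : Fin n → ℝ)
    (hρ : ∀ i, 0 < ρ i)
    (A : Matrix (Fin 3) (Fin 3) ℝ) (hAdef : A = ∑ i, ρ i • vecMulVec (r i) (r i))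
    (R P : Matrix (Fin 3) (Fin 3) ℝ) (hR : SO3 R) (hP : SO3 P)
    (b : Fin n → (Fin 3 → ℝ)) (hb : ∀ i, b i = Rᵀ *ᵥ r i) :
    psiMap (A * R * Pᵀ) =
      (1 / 2 : ℝ) • (P *ᵥ ∑ i, ρ i • cross3 (b i) (Pᵀ *ᵥ r i)) :=
  stmt_13_general n r ρ A hAdef R P hP b hb
end
end
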